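/- (Proposition 2, case 2a) Assume J₁₁ < 0 and J₁₂ > |J₁₁|, and set λ_M = J₁₁ + J₁₂ > 0. If 0 < β ≤ 2/λ_M, then the origin (0,0) is the unique critical point of f in (−1,1)², and it is a local maximum point of f. -/

import Mathlib

/-- The entropy function 𝓘(x) = ((1+x)log(1+x) + (1-x)log(1-x))/2.
Note `Real.log 0 = 0` in Mathlib, which implements the convention 0·log 0 = 0. -/
noncomputable def entI (x : ℝ) : ℝ :=
  ((1 + x) * Real.log (1 + x) + (1 - x) * Real.log (1 - x)) / 2

/-- Pressure functional of the symmetric zero-field bipartite mean-field model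
(α₁ = α₂ = 1/2, J₁₁ = J₂₂, h₁ = h₂ = 0). -/
noncomputable def fSym (β J11 J12 : ℝ) (μ : ℝ × ℝ) : ℝ :=
  β / 8 * (J11 * (μ.1 ^ 2 + μ.2 ^ 2) + 2 * J12 * μ.1 * μ.2) - (entI μ.1 + entI μ.2) / 2

/-- A critical point of f: a point of the open square (−1,1)² where both partial
derivatives of f vanish. -/
def IsCritPt (β J11 J12 : ℝ) (μ : ℝ × ℝ) : Prop :=
  μ.1 ∈ Set.Ioo (-1 : ℝ) 1 ∧ μ.2 ∈ Set.Ioo (-1 : ℝ) 1 ∧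
    deriv (fun x => fSym β J11 J12 (x, μ.2)) μ.1 = 0 ∧
    deriv (fun y => fSym β J11 J12 (μ.1, y)) μ.2 = 0

/-!
Both partial derivatives vanish exactly when `artanh μᵢ = β/2 (J₁₁ μᵢ + J₁₂ μⱼ)`. Subtracting
the two equations, `artanh` is increasing while `J₁₁ - J₁₂ < 0`, so `μ₁ = μ₂ = m`; then
`artanh m = β λ_M / 2 · m` with `β λ_M ≤ 2`, while `|artanh m| > |m|` for `m ≠ 0`, so `m = 0`.
For the local maximum, `𝓘(x) ≥ x²/2` bounds `f` by a quadratic form whose coefficients on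
`(μ₁ + μ₂)²` and `(μ₁ - μ₂)²` are `(β λ_M - 2)/16 ≤ 0` and `(β (J₁₁ - J₁₂) - 2)/16 < 0`.
-/

open Real Set Topology

lemma artanh_eq_half_log_sub_log {x : ℝ} (hx : x ∈ Ioo (-1) 1) :
    artanh x = (log (1 + x) - log (1 - x)) / 2 := by
  rw [artanh_eq_half_log (Ioo_subset_Icc_self hx),
    log_div (by linarith [hx.1]) (by linarith [hx.2])]
  ring

lemma hasSum_artanh {x : ℝ} (hx : |x| < 1) :
    HasSum (fun k : ℕ => x ^ (2 * k + 1) / (2 * k + 1)) (artanh x) := by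
  rw [artanh_eq_half_log_sub_log (abs_lt.mp hx)]
  exact ((hasSum_log_sub_log_of_abs_lt_one hx).div_const 2).congr_fun fun k => by ring

lemma self_le_artanh {x : ℝ} (h0 : 0 ≤ x) (h1 : x < 1) : x ≤ artanh x := by
  have hx : |x| < 1 := abs_lt.mpr ⟨by linarith, h1⟩
  simpa using sum_le_hasSum (Finset.range 1) (fun k _ => by positivity) (hasSum_artanh hx)

lemma sq_lt_mul_artanh {x : ℝ} (hx : |x| < 1) (hx0 : x ≠ 0) : x ^ 2 < x * artanh x := by
  have hterm : ∀ k : ℕ, 0 ≤ x * (x ^ (2 * k + 1) / (2 * k + 1)) := fun k => by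
    rw [← mul_div_assoc, ← pow_succ', show 2 * k + 1 + 1 = 2 * (k + 1) by ring, pow_mul]
    positivity
  have hpartial :=
    sum_le_hasSum (Finset.range 2) (fun k _ => hterm k) ((hasSum_artanh hx).mul_left x)
  norm_num [Finset.sum_range_succ] at hpartial
  nlinarith [pow_pos (pow_pos (abs_pos.mpr hx0) 2) 2, sq_abs x]

lemma entI_neg (x : ℝ) : entI (-x) = entI x := by
  simp only [entI, sub_neg_eq_add, ← sub_eq_add_neg]
  ring

lemma hasDerivAt_entI {x : ℝ} (hx : x ∈ Ioo (-1) 1) : HasDerivAt entI (artanh x) x := by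
  have hp : HasDerivAt (fun y => 1 + y) 1 x := (hasDerivAt_id' x).const_add 1
  have hm : HasDerivAt (fun y => 1 - y) (-1) x := (hasDerivAt_id' x).const_sub 1
  have hp0 : 1 + x ≠ 0 := by linarith [hx.1]
  have hm0 : 1 - x ≠ 0 := by linarith [hx.2]
  refine (((hp.mul (hp.log hp0)).add (hm.mul (hm.log hm0))).div_const 2).congr_deriv ?_
  rw [artanh_eq_half_log_sub_log hx]
  field_simp
  ring

lemma sq_div_two_le_entI {x : ℝ} (hx : x ∈ Ioo (-1) 1) : x ^ 2 / 2 ≤ entI x := by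
  wlog h0 : 0 ≤ x generalizing x
  · simpa [entI_neg] using this (x := -x) ⟨by linarith [hx.2], by linarith [hx.1]⟩ (by linarith)
  have hd : ∀ y ∈ Ico (0 : ℝ) 1, HasDerivAt (fun y => entI y - y ^ 2 / 2) (artanh y - y) y :=
    fun y hy => ((hasDerivAt_entI ⟨by linarith [hy.1], hy.2⟩).sub
      ((hasDerivAt_pow 2 y).div_const 2)).congr_deriv (by norm_num)
  have hmono : MonotoneOn (fun y => entI y - y ^ 2 / 2) (Ico 0 1) := by
    refine monotoneOn_of_hasDerivWithinAt_nonneg (convex_Ico 0 1)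
      (fun y hy => (hd y hy).continuousAt.continuousWithinAt)
      (fun y hy => (hd y (interior_subset hy)).hasDerivWithinAt) fun y hy => ?_
    rw [interior_Ico] at hy
    exact sub_nonneg.mpr (self_le_artanh hy.1.le hy.2)
  simpa [entI] using hmono ⟨le_rfl, one_pos⟩ ⟨h0, hx.2⟩ h0

lemma fSym_swap (β J11 J12 : ℝ) (μ : ℝ × ℝ) : fSym β J11 J12 μ.swap = fSym β J11 J12 μ := by
  simp only [fSym, Prod.fst_swap, Prod.snd_swap]
  ring

lemma fSym_zero (β J11 J12 : ℝ) : fSym β J11 J12 0 = 0 := by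
  simp [fSym, entI]

lemma hasDerivAt_fSym_fst (β J11 J12 b : ℝ) {a : ℝ} (ha : a ∈ Ioo (-1) 1) :
    HasDerivAt (fun x => fSym β J11 J12 (x, b))
      (β / 4 * (J11 * a + J12 * b) - artanh a / 2) a := by
  have hquad := ((((hasDerivAt_pow 2 a).add_const (b ^ 2)).const_mul J11).add
    (((hasDerivAt_id' a).const_mul (2 * J12)).mul_const b)).const_mul (β / 8)
  refine (hquad.sub (((hasDerivAt_entI ha).add_const (entI b)).div_const 2)).congr_deriv ?_
  ring

lemma hasDerivAt_fSym_snd (β J11 J12 a : ℝ) {b : ℝ} (hb : b ∈ Ioo (-1) 1) :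
    HasDerivAt (fun y => fSym β J11 J12 (a, y))
      (β / 4 * (J11 * b + J12 * a) - artanh b / 2) b :=
  (hasDerivAt_fSym_fst β J11 J12 a hb).congr_of_eventuallyEq
    (Filter.Eventually.of_forall fun y => fSym_swap β J11 J12 (y, a))

lemma isCritPt_iff_artanh_eq {β J11 J12 a b : ℝ} :
    IsCritPt β J11 J12 (a, b) ↔ a ∈ Ioo (-1) 1 ∧ b ∈ Ioo (-1) 1 ∧
      artanh a = β / 2 * (J11 * a + J12 * b) ∧ artanh b = β / 2 * (J11 * b + J12 * a) := by
  refine and_congr_right fun ha => and_congr_right fun hb => ?_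
  rw [(hasDerivAt_fSym_fst β J11 J12 b ha).deriv, (hasDerivAt_fSym_snd β J11 J12 a hb).deriv]
  constructor <;> rintro ⟨h1, h2⟩ <;> constructor <;> linarith

lemma eq_zero_of_artanh_eq {β J11 J12 a b : ℝ} (hβ : 0 ≤ β) (hJ : J11 < J12)
    (hβJ : β * (J11 + J12) ≤ 2) (ha : a ∈ Ioo (-1) 1) (hb : b ∈ Ioo (-1) 1)
    (hea : artanh a = β / 2 * (J11 * a + J12 * b)) (heb : artanh b = β / 2 * (J11 * b + J12 * a)) :
    a = 0 ∧ b = 0 := by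
  have hab : a = b := by
    by_contra hne
    have hmono : 0 < (artanh a - artanh b) * (a - b) := by
      rcases lt_or_gt_of_ne hne with h | h
      · exact mul_pos_of_neg_of_neg (sub_neg.mpr (artanh_lt_artanh ha.1 hb.2 h)) (sub_neg.mpr h)
      · exact mul_pos (sub_pos.mpr (artanh_lt_artanh hb.1 ha.2 h)) (sub_pos.mpr h)
    have hdiff : (artanh a - artanh b) * (a - b) = β / 2 * (J11 - J12) * (a - b) ^ 2 := by
      rw [hea, heb]; ring
    nlinarith [mul_nonneg hβ (sq_nonneg (a - b))]
  subst hab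
  have ha0 : a = 0 := by
    by_contra h0
    have hlt := sq_lt_mul_artanh (abs_lt.mpr ha) h0
    rw [hea] at hlt
    nlinarith [mul_le_mul_of_nonneg_right hβJ (sq_nonneg a)]
  exact ⟨ha0, ha0⟩

lemma fSym_nonpos {β J11 J12 : ℝ} (hβ : 0 ≤ β) (hJ : J11 < J12) (hβJ : β * (J11 + J12) ≤ 2)
    {μ : ℝ × ℝ} (h1 : μ.1 ∈ Ioo (-1) 1) (h2 : μ.2 ∈ Ioo (-1) 1) : fSym β J11 J12 μ ≤ 0 := by
  obtain ⟨a, b⟩ := μ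
  have hquad : β / 8 * (J11 * (a ^ 2 + b ^ 2) + 2 * J12 * a * b) - (a ^ 2 + b ^ 2) / 4 =
      ((β * (J11 + J12) - 2) * (a + b) ^ 2 + (β * (J11 - J12) - 2) * (a - b) ^ 2) / 16 := by
    ring
  have hsum : (β * (J11 + J12) - 2) * (a + b) ^ 2 ≤ 0 :=
    mul_nonpos_of_nonpos_of_nonneg (by linarith) (sq_nonneg _)
  have hdiff : (β * (J11 - J12) - 2) * (a - b) ^ 2 ≤ 0 :=
    mul_nonpos_of_nonpos_of_nonneg (by nlinarith) (sq_nonneg _)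
  have := sq_div_two_le_entI h1
  have := sq_div_two_le_entI h2
  unfold fSym
  linarith

theorem prop2_case2a_general (β J11 J12 : ℝ) (hJ12 : |J11| < J12)
    (hβ0 : 0 < β) (hβ : β ≤ 2 / (J11 + J12)) :
    (∀ μ : ℝ × ℝ, IsCritPt β J11 J12 μ ↔ μ = (0, 0)) ∧
      IsLocalMax (fSym β J11 J12) (0, 0) := by
  obtain ⟨hJneg, hJ⟩ := abs_lt.mp hJ12
  have hβJ : β * (J11 + J12) ≤ 2 := (le_div_iff₀ (by linarith)).mp hβ
  refine ⟨fun μ => ⟨fun h => ?_, ?_⟩, ?_⟩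
  · obtain ⟨ha, hb, hea, heb⟩ := isCritPt_iff_artanh_eq.mp h
    obtain ⟨h1, h2⟩ := eq_zero_of_artanh_eq hβ0.le hJ hβJ ha hb hea heb
    exact Prod.ext h1 h2
  · rintro rfl
    exact isCritPt_iff_artanh_eq.mpr ⟨by norm_num, by norm_num, by simp, by simp⟩
  · have hs : Ioo (-1 : ℝ) 1 ×ˢ Ioo (-1 : ℝ) 1 ∈ 𝓝 ((0, 0) : ℝ × ℝ) :=
      (isOpen_Ioo.prod isOpen_Ioo).mem_nhds (by norm_num)
    filter_upwards [hs] with μ hμ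
    exact (fSym_nonpos hβ0.le hJ hβJ hμ.1 hμ.2).trans (fSym_zero β J11 J12).ge

/-- Proposition 2, case 2a: for J₁₁ < 0, J₁₂ > |J₁₁| (so λ_M = J₁₁ + J₁₂ > 0), if
0 < β ≤ 2/λ_M then the origin is the unique critical point of f and a local maximum
point. -/
theorem prop2_case2a (β J11 J12 : ℝ) (hJ11 : J11 < 0) (hJ12 : |J11| < J12)
    (hβ0 : 0 < β) (hβ : β ≤ 2 / (J11 + J12)) :
    (∀ μ : ℝ × ℝ, IsCritPt β J11 J12 μ ↔ μ = (0, 0)) ∧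
      IsLocalMax (fSym β J11 J12) (0, 0) :=
  prop2_case2a_general β J11 J12 hJ12 hβ0 hβ
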